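/- If the Klein bottle group K = ⟨a, b | a^b = a⁻¹⟩ is a verbally closed subgroup of a group G, then the image of K in G/⟨⟨b²⟩⟩, which is isomorphic to the infinite dihedral group D∞ = K/⟨b²⟩, is verbally closed in G/⟨⟨b²⟩⟩. -/

import Mathlib

/-- The single relator `b⁻¹ * a * b * a` of the Klein bottle group
`K = ⟨a, b ∣ b⁻¹ a b = a⁻¹⟩`, with generator `0 = a`, `1 = b`. -/
def KleinRels : Set (FreeGroup (Fin 2)) :=
  {(FreeGroup.of 1)⁻¹ * FreeGroup.of 0 * FreeGroup.of 1 * FreeGroup.of 0}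

/-- The Klein bottle group. -/
abbrev KleinGroup := PresentedGroup KleinRels

def aK : KleinGroup := PresentedGroup.of 0
def bK : KleinGroup := PresentedGroup.of 1


/-- Relators of the infinite dihedral group `D∞ = ⟨a, b ∣ aᵇ = a⁻¹, b² = 1⟩`. -/
def DinfRels : Set (FreeGroup (Fin 2)) :=
  {(FreeGroup.of 1)⁻¹ * FreeGroup.of 0 * FreeGroup.of 1 * FreeGroup.of 0,
    (FreeGroup.of 1) ^ 2}

/-- The infinite dihedral group. -/
abbrev Dinf := PresentedGroup DinfRels

/-- `H` is verbally closed in `G`: every equation `w(x₁,x₂,…) = h` with `h ∈ H`,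
`w` a word in the free group, that has a solution in `G` has a solution in `H`. -/
def VerballyClosed {G : Type*} [Group G] (H : Subgroup G) : Prop :=
  ∀ (w : FreeGroup ℕ) (h : G), h ∈ H → (∃ g : ℕ → G, FreeGroup.lift g w = h) →
    ∃ k : ℕ → G, (∀ n, k n ∈ H) ∧ FreeGroup.lift k w = h

/-!
Let `N = ⟨⟨φ(b)²⟩⟩` and let `π : K → D∞ ≅ DihedralGroup 0` be the quotient by `⟨⟨b²⟩⟩`. Every
element of `N` is the value at `z = φ(b)` of a word `ρ(z, y₁, y₂, …)` lying in the normal closure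
of `z²`, so verbal closedness moves equations built from such words down to `K`. There two
invariants of a solution are read off: the exponent sum `β` of `b`, a homomorphism to `ℤ` that
takes values in `2β(c)ℤ` on the normal closure of `c²`, and the image under `π`.

Solving `ρ · z^(2 - β(x)) = x b^(2 - β(x))` in `K` forces `β(z)` to be odd, hence `z² ∈ ⟨⟨b²⟩⟩`,
and shows that `⟨⟨b²⟩⟩` is the kernel of `K → G/N`; this gives the isomorphism with `D∞`. For
verbal closedness, lift a solution of `w = φ(x)` modulo `N` to `G`. If `π(x)` is a reflection, a
solution in `K` of `w · ρ = x` solves `w = x` modulo `⟨⟨b²⟩⟩` after conjugation by a power of `a`.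
If `π(x)` is a nontrivial rotation, the equation `w² z w⁻² z · ρ = x² b x⁻² b` forces `z` to be a
reflection and then `w` to be `x` modulo `⟨⟨b²⟩⟩`.
-/

open FreeGroup (lift of map lift_apply_of)
open Subgroup DihedralGroup

section FreeGroup
variable {α β H K : Type*} [Group H] [Group K]

theorem FreeGroup.lift_map_apply (g : β → H) (f : α → β) (u : FreeGroup α) :
    lift g (map f u) = lift (g ∘ f) u :=
  DFunLike.congr_fun (FreeGroup.ext_hom ((lift g).comp (map f)) (lift (g ∘ f)) (by simp)) u

theorem MonoidHom.apply_freeGroupLift (F : H →* K) (g : α → H) (u : FreeGroup α) :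
    F (lift g u) = lift (F ∘ g) u :=
  DFunLike.congr_fun (FreeGroup.ext_hom (F.comp (lift g)) (lift (F ∘ g)) (by simp)) u

theorem FreeGroup.lift_conj (c : H) (g : α → H) (u : FreeGroup α) :
    lift (fun a => c * g a * c⁻¹) u = c * lift g u * c⁻¹ :=
  ((MulAut.conj c).toMonoidHom.apply_freeGroupLift g u).symm

theorem MonoidHom.map_mem_normalClosure (F : H →* K) {s x : H} (hx : x ∈ normalClosure {s}) :
    F x ∈ normalClosure {F s} := by
  simpa using map_normalClosure_le {s} F ⟨x, hx, rfl⟩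

theorem FreeGroup.lift_mem_normalClosure_pow {ρ : FreeGroup α} {a : α} {n : ℕ}
    (hρ : ρ ∈ normalClosure {of a ^ n}) (κ : α → H) : lift κ ρ ∈ normalClosure {κ a ^ n} := by
  simpa using (lift κ).map_mem_normalClosure hρ

theorem exists_word_of_mem_normalClosure_pow {t u : H} (n : ℕ)
    (hu : u ∈ normalClosure {t ^ n}) :
    ∃ (ρ : FreeGroup (Option ℕ)) (g : ℕ → H),
      ρ ∈ normalClosure {of none ^ n} ∧ lift (fun o => o.elim t g) ρ = u := by
  have hgen : (of none : FreeGroup (Option ℕ)) ^ n ∈ normalClosure {of none ^ n} :=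
    subset_normalClosure (Set.mem_singleton _)
  -- A new conjugator takes the variable `some 0`, and the old ones are shifted up.
  have step : ∀ (c : H) (ε : ℤ) (ρ : FreeGroup (Option ℕ)) (g : ℕ → H),
      ρ ∈ normalClosure {of none ^ n} →
      ∃ (ρ' : FreeGroup (Option ℕ)) (g' : ℕ → H), ρ' ∈ normalClosure {of none ^ n} ∧
        lift (fun o => o.elim t g') ρ' =
          c * (t ^ n) ^ ε * c⁻¹ * lift (fun o => o.elim t g) ρ := by
    intro c ε ρ g hρ
    refine ⟨of (some 0) * (of none ^ n) ^ ε * (of (some 0))⁻¹ * map (Option.map Nat.succ) ρ,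
      fun i => Nat.casesOn i c g, ?_, ?_⟩
    · refine mul_mem (normalClosure_normal.conj_mem _ (zpow_mem hgen ε) _) ?_
      rw [FreeGroup.map_eq_lift]
      simpa using (lift (of ∘ Option.map Nat.succ)).map_mem_normalClosure hρ
    · have hshift : (fun o : Option ℕ => o.elim t fun i => Nat.casesOn i c g) ∘
          Option.map Nat.succ = fun o => o.elim t g := funext fun o => by cases o <;> rfl
      rw [map_mul, map_mul, map_mul, map_inv, map_zpow, map_pow, FreeGroup.lift_map_apply,
        lift_apply_of, lift_apply_of, hshift]
      rfl
  have hconj : ∀ x ∈ Group.conjugatesOfSet {t ^ n}, ∃ c : H, c * t ^ n * c⁻¹ = x := by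
    intro x hx
    obtain ⟨s, hs, hsx⟩ := Group.mem_conjugatesOfSet_iff.mp hx
    rw [Set.mem_singleton_iff.mp hs] at hsx
    exact isConj_iff.mp hsx
  induction hu using closure_induction_left with
  | one => exact ⟨1, fun _ => 1, one_mem _, map_one _⟩
  | mul_left x hx y _ ih =>
    obtain ⟨ρ, g, hρ, rfl⟩ := ih
    obtain ⟨c, rfl⟩ := hconj x hx
    simpa using step c 1 ρ g hρ
  | inv_mul_cancel x hx y _ ih =>
    obtain ⟨ρ, g, hρ, rfl⟩ := ih
    obtain ⟨c, rfl⟩ := hconj x hx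
    simpa [mul_assoc] using step c (-1) ρ g hρ

end FreeGroup

theorem MonoidHom.mem_zpowers_of_mem_normalClosure {H M : Type*} [Group H] [CommGroup M]
    (χ : H →* M) {s x : H} (hx : x ∈ normalClosure {s}) : χ x ∈ zpowers (χ s) :=
  normalClosure_le_normal (N := (zpowers (χ s)).comap χ)
    (Set.singleton_subset_iff.mpr (mem_zpowers _)) hx

theorem Subgroup.zpow_mem_of_sq_mem {H : Type*} [Group H] (S : Subgroup H) {y : H}
    (hy : y ^ 2 ∈ S) {m : ℤ} (hm : Even m) : y ^ m ∈ S := by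
  obtain ⟨j, rfl⟩ := hm
  rw [← two_mul, zpow_mul, zpow_ofNat]
  exact S.zpow_mem hy j

theorem Int.odd_of_mul_eq_one {a b : ℤ} (h : a * b = 1) : Odd a :=
  Int.not_even_iff_odd.mp fun he => Int.not_even_one (h ▸ he.mul_right b)

section VerballyClosed
variable {G : Type*} [Group G] {α : Type*} [Countable α]

theorem VerballyClosed.exists_lift_eq {H : Subgroup G} (hH : VerballyClosed H)
    (u : FreeGroup α) {h : G} (hh : h ∈ H) (hsol : ∃ g : α → G, lift g u = h) :
    ∃ k : α → G, (∀ a, k a ∈ H) ∧ lift k u = h := by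
  obtain ⟨f, hf⟩ := Countable.exists_injective_nat α
  obtain ⟨g, rfl⟩ := hsol
  obtain ⟨k, hkH, hk⟩ := hH (map f u) _ hh
    ⟨Function.extend f g 1, by rw [FreeGroup.lift_map_apply, Function.extend_comp hf]⟩
  exact ⟨k ∘ f, fun a => hkH (f a), by rw [← FreeGroup.lift_map_apply, hk]⟩

theorem VerballyClosed.exists_lift_eq_of_injective {K : Type*} [Group K] {φ : K →* G}
    (hinj : Function.Injective φ) (hvc : VerballyClosed φ.range) (u : FreeGroup α) (t : K)
    (hsol : ∃ g : α → G, lift g u = φ t) : ∃ κ : α → K, lift κ u = t := by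
  obtain ⟨k, hk, hku⟩ := hvc.exists_lift_eq u ⟨t, rfl⟩ hsol
  choose κ hκ using hk
  refine ⟨κ, hinj ?_⟩
  rw [MonoidHom.apply_freeGroupLift, ← hku]
  exact congrArg (lift · u) (funext hκ)

end VerballyClosed

namespace Dinf

def a : Dinf := PresentedGroup.of 0
def b : Dinf := PresentedGroup.of 1

theorem b_mul_b : b * b = 1 := by
  simpa [a, b, PresentedGroup.of, sq] using
    PresentedGroup.one_of_mem (rels := DinfRels) (Or.inr rfl)

theorem b_mul_a_mul_b : b * a * b = a⁻¹ := by
  have h : b⁻¹ * a * b * a = 1 := by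
    simpa [a, b, PresentedGroup.of] using
      PresentedGroup.one_of_mem (rels := DinfRels) (Or.inl rfl)
  rw [inv_eq_of_mul_eq_one_left b_mul_b] at h
  exact eq_inv_of_mul_eq_one_left h

theorem b_mul_a_zpow_mul_b (i : ℤ) : b * a ^ i * b = a ^ (-i) := by
  have := conj_zpow (a := b) (b := a) (i := i)
  rw [inv_eq_of_mul_eq_one_left b_mul_b, b_mul_a_mul_b, inv_zpow, ← zpow_neg] at this
  exact this.symm

theorem a_zpow_mul_b (i : ℤ) : a ^ i * b = b * a ^ (-i) := by
  rw [← b_mul_a_zpow_mul_b, ← mul_assoc, ← mul_assoc, b_mul_b, one_mul]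

def toDihedral : Dinf →* DihedralGroup 0 :=
  PresentedGroup.toGroup (f := ![r 1, sr 0]) (by
    rintro _ (rfl | rfl) <;> rfl)

def ofDihedral : DihedralGroup 0 →* Dinf where
  toFun
    | r i => a ^ (i.cast : ℤ)
    | sr i => b * a ^ (i.cast : ℤ)
  map_one' := zpow_zero a
  map_mul' := by
    rintro (i | i) (j | j) <;>
      simp only [r_mul_r, r_mul_sr, sr_mul_r, sr_mul_sr, ZMod.cast_add (dvd_refl 0),
        ZMod.cast_sub (dvd_refl 0), zpow_add, zpow_sub]
    case r.sr => rw [← mul_assoc (a ^ _), a_zpow_mul_b]; group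
    case sr.r => group
    case sr.sr => rw [← mul_assoc, b_mul_a_zpow_mul_b]; group

theorem ofDihedral_comp_toDihedral : ofDihedral.comp toDihedral = MonoidHom.id Dinf := by
  refine PresentedGroup.ext fun i => ?_
  fin_cases i
  · exact zpow_one a
  · exact mul_one b

theorem toDihedral_injective : Function.Injective toDihedral :=
  Function.LeftInverse.injective (g := ofDihedral) (DFunLike.congr_fun ofDihedral_comp_toDihedral)

end Dinf

def dihedralParity : DihedralGroup 0 →* Multiplicative (ZMod 2) × Multiplicative (ZMod 2) where
  toFun
    | r i => (1, .ofAdd (i.cast))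
    | sr i => (.ofAdd 1, .ofAdd (i.cast))
  map_one' := rfl
  map_mul' := by
    have hsub : ∀ x y : ZMod 2, x - y = y + x := by decide
    rintro (i | i) (j | j) <;>
      simp [r_mul_r, r_mul_sr, sr_mul_r, sr_mul_sr, ZMod.cast_add (dvd_zero 2),
        ZMod.cast_sub (dvd_zero 2), ← ofAdd_add, hsub, (by decide : (1 + 1 : ZMod 2) = 0)]

theorem dihedralParity_sq (d : DihedralGroup 0) : dihedralParity (d ^ 2) = 1 := by
  rw [map_pow]
  generalize dihedralParity d = x
  revert x
  decide

theorem exists_eq_r_two_mul_of_dihedralParity_eq_one {d : DihedralGroup 0}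
    (h : dihedralParity d = 1) : ∃ j, d = r (2 * j) := by
  rcases d with i | i
  · have : (i.cast : ZMod 2) = 0 := congrArg (Multiplicative.toAdd ∘ Prod.snd) h
    obtain ⟨j, hj⟩ := (ZMod.intCast_zmod_eq_zero_iff_dvd i 2).mp this
    exact ⟨j, congrArg r hj⟩
  · exact absurd (congrArg (fun x => Multiplicative.toAdd x.1) h) one_ne_zero

theorem exists_r_conj_sr_mul_eq {e : DihedralGroup 0} (he : dihedralParity e = 1) (i : ZMod 0) :
    ∃ k, r k * (sr i * e) * (r k)⁻¹ = sr i := by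
  obtain ⟨j, rfl⟩ := exists_eq_r_two_mul_of_dihedralParity_eq_one he
  refine ⟨j, ?_⟩
  simp only [sr_mul_r, r_mul_sr, inv_r]
  congr 1
  ring

theorem r_sq_mul_sr_mul_inv_mul_sr (q j : ZMod 0) :
    r q ^ 2 * sr j * (r q ^ 2)⁻¹ * sr j = r (4 * q) := by
  simp only [r_pow, r_mul_sr, sr_mul_r, sr_mul_sr, inv_r]
  congr 1
  push_cast
  ring

theorem eq_r_of_sq_mul_sr_mul_inv_mul_sr_eq {p : DihedralGroup 0} {j m : ZMod 0} (hm : m ≠ 0)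
    (h : p ^ 2 * sr j * (p ^ 2)⁻¹ * sr j = r (4 * m)) : p = r m := by
  rcases p with q | q
  · rw [r_sq_mul_sr_mul_inv_mul_sr, r.injEq] at h
    rw [mul_left_cancel₀ (by decide : (4 : ZMod 0) ≠ 0) h]
  · rw [sq, sr_mul_self, inv_one, mul_one, one_mul, sr_mul_self, ← r_zero, r.injEq] at h
    exact absurd ((mul_eq_zero.mp h.symm).resolve_left (by decide : (4 : ZMod 0) ≠ 0)) hm

namespace KleinGroup

def toDinf : KleinGroup →* Dinf :=
  PresentedGroup.map (MonoidHom.id _) fun _ h => Or.inl h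

theorem toDinf_surjective : Function.Surjective toDinf := by
  intro y
  obtain ⟨x, rfl⟩ := PresentedGroup.mk_surjective _ y
  exact ⟨PresentedGroup.mk _ x, rfl⟩

def dinfToQuotient : Dinf →* KleinGroup ⧸ normalClosure {bK ^ 2} :=
  PresentedGroup.toGroup (f := fun i => QuotientGroup.mk' _ (PresentedGroup.of i)) (by
    have hlift : FreeGroup.lift (fun i => QuotientGroup.mk' (normalClosure {bK ^ 2})
        (PresentedGroup.of i)) = (QuotientGroup.mk' _).comp (PresentedGroup.mk KleinRels) :=
      FreeGroup.ext_hom _ _ fun _ => rfl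
    rintro _ (rfl | rfl) <;> rw [hlift, MonoidHom.comp_apply]
    · rw [PresentedGroup.one_of_mem (rels := KleinRels) rfl, map_one]
    · rw [map_pow, QuotientGroup.mk'_apply, QuotientGroup.eq_one_iff]
      exact subset_normalClosure rfl)

theorem ker_toDinf : toDinf.ker = normalClosure {bK ^ 2} := by
  have hσ : dinfToQuotient.comp toDinf = QuotientGroup.mk' _ :=
    PresentedGroup.ext fun _ => rfl
  apply le_antisymm
  · intro x hx
    rw [← QuotientGroup.eq_one_iff, ← QuotientGroup.mk'_apply, ← hσ, MonoidHom.comp_apply,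
      hx, map_one]
  · refine normalClosure_le_normal (Set.singleton_subset_iff.mpr ?_)
    show toDinf bK ^ 2 = 1
    exact PresentedGroup.one_of_mem (rels := DinfRels) (Or.inr rfl)

def toDihedral : KleinGroup →* DihedralGroup 0 := Dinf.toDihedral.comp toDinf

@[simp]
theorem toDihedral_aK : toDihedral aK = r 1 := rfl

@[simp]
theorem toDihedral_bK : toDihedral bK = sr 0 := rfl

theorem ker_toDihedral : toDihedral.ker = normalClosure {bK ^ 2} := by
  rw [toDihedral, MonoidHom.ker_comp_of_injective _ _ Dinf.toDihedral_injective, ker_toDinf]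

def bExp : KleinGroup →* Multiplicative ℤ :=
  PresentedGroup.toGroup (f := ![1, .ofAdd 1]) (by rintro _ rfl; simp)

@[simp]
theorem bExp_bK : bExp bK = .ofAdd 1 := rfl

theorem dihedralParity_toDihedral_fst (c : KleinGroup) :
    (dihedralParity (toDihedral c)).1 = .ofAdd ((bExp c).toAdd : ZMod 2) := by
  have : (MonoidHom.fst _ _).comp (dihedralParity.comp toDihedral) =
      (Int.castAddHom (ZMod 2)).toMultiplicative.comp bExp := by
    refine PresentedGroup.ext fun i => ?_
    fin_cases i <;> rfl
  exact DFunLike.congr_fun this c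

theorem exists_toDihedral_eq_sr {c : KleinGroup} (hc : Odd (bExp c).toAdd) :
    ∃ i, toDihedral c = sr i := by
  have h := dihedralParity_toDihedral_fst c
  rw [(ZMod.intCast_eq_one_iff_odd).mpr hc] at h
  rcases hd : toDihedral c with i | i
  · rw [hd] at h
    exact absurd (congrArg Multiplicative.toAdd h) zero_ne_one
  · exact ⟨i, rfl⟩

theorem normalClosure_sq_le_of_odd {c : KleinGroup} (hc : Odd (bExp c).toAdd) :
    normalClosure {c ^ 2} ≤ normalClosure {bK ^ 2} := by
  obtain ⟨i, hi⟩ := exists_toDihedral_eq_sr hc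
  refine normalClosure_le_normal (Set.singleton_subset_iff.mpr ?_)
  rw [SetLike.mem_coe, ← ker_toDihedral, MonoidHom.mem_ker, map_pow, hi, sq, sr_mul_self]

theorem bExp_of_mem_normalClosure_sq {c x : KleinGroup} (hx : x ∈ normalClosure {c ^ 2}) :
    ∃ k : ℤ, (bExp x).toAdd = 2 * k * (bExp c).toAdd := by
  obtain ⟨k, hk⟩ := mem_zpowers_iff.mp (bExp.mem_zpowers_of_mem_normalClosure hx)
  exact ⟨k, by rw [← hk, map_pow, toAdd_zpow, toAdd_pow]; ring⟩

variable {G : Type*} [Group G] {φ : KleinGroup →* G}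

theorem mem_normalClosure_of_map_mem (hinj : Function.Injective φ)
    (hvc : VerballyClosed φ.range) {x : KleinGroup} (hx : φ x ∈ normalClosure {φ bK ^ 2}) :
    x ∈ normalClosure {bK ^ 2} := by
  obtain ⟨ρ, g, hρ, hρg⟩ := exists_word_of_mem_normalClosure_pow 2 hx
  set v := (bExp x).toAdd
  have hv : Even v := by
    obtain ⟨κ, hκ⟩ := hvc.exists_lift_eq_of_injective hinj ρ x ⟨_, hρg⟩
    obtain ⟨k, hk⟩ := bExp_of_mem_normalClosure_sq (hκ ▸ FreeGroup.lift_mem_normalClosure_pow hρ κ)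
    exact ⟨k * (bExp (κ none)).toAdd, hk.trans (by ring)⟩
  obtain ⟨κ, hκ⟩ := hvc.exists_lift_eq_of_injective hinj (ρ * of none ^ (2 - v))
    (x * bK ^ (2 - v)) ⟨fun o => o.elim (φ bK) g, by simp [hρg]⟩
  rw [map_mul, map_zpow, lift_apply_of] at hκ
  set c := κ none
  have hR := FreeGroup.lift_mem_normalClosure_pow hρ κ
  have hc : Odd (bExp c).toAdd := by
    obtain ⟨l, hl⟩ := bExp_of_mem_normalClosure_sq hR
    obtain ⟨w, hw⟩ := hv
    have h := congrArg (fun y => (bExp y).toAdd) hκ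
    simp only [map_mul, map_zpow, toAdd_mul, toAdd_zpow, smul_eq_mul, hl, bExp_bK,
      toAdd_ofAdd] at h
    exact Int.odd_of_mul_eq_one (b := l + 1 - w)
      (mul_left_cancel₀ two_ne_zero (by linear_combination h + (bExp c).toAdd * hw))
  have hsub := normalClosure_sq_le_of_odd hc
  have hxb : x * bK ^ (2 - v) ∈ normalClosure {bK ^ 2} := hκ ▸ mul_mem (hsub hR)
    ((normalClosure {bK ^ 2}).zpow_mem_of_sq_mem (hsub (subset_normalClosure rfl))
      (even_two.sub hv))
  exact (mul_mem_cancel_right ((normalClosure {bK ^ 2}).zpow_mem_of_sq_mem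
    (subset_normalClosure rfl) (even_two.sub hv))).mp hxb

theorem map_mem_normalClosure_sq {x : KleinGroup} (hx : x ∈ normalClosure {bK ^ 2}) :
    φ x ∈ normalClosure {φ bK ^ 2} := by
  simpa using φ.map_mem_normalClosure hx

theorem ker_mk'_comp (hinj : Function.Injective φ) (hvc : VerballyClosed φ.range) :
    ((QuotientGroup.mk' (normalClosure {φ bK ^ 2})).comp φ).ker = normalClosure {bK ^ 2} := by
  ext x
  rw [MonoidHom.mem_ker, MonoidHom.comp_apply, QuotientGroup.mk'_apply, QuotientGroup.eq_one_iff]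
  exact ⟨mem_normalClosure_of_map_mem hinj hvc, map_mem_normalClosure_sq⟩

theorem nonempty_map_range_mulEquiv (hinj : Function.Injective φ)
    (hvc : VerballyClosed φ.range) :
    Nonempty ((φ.range.map (QuotientGroup.mk' (normalClosure {φ bK ^ 2}))) ≃* Dinf) := by
  let f := (QuotientGroup.mk' (normalClosure {φ bK ^ 2})).comp φ
  have hf : f.ker = toDinf.ker := by rw [ker_mk'_comp hinj hvc, ker_toDinf]
  exact ⟨(MulEquiv.subgroupCongr (MonoidHom.range_comp _ φ)).symm.trans
    ((QuotientGroup.quotientKerEquivRange f).symm.trans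
      ((QuotientGroup.quotientMulEquivOfEq hf).trans
        (QuotientGroup.quotientKerEquivOfSurjective _ toDinf_surjective)))⟩

theorem mk'_map_eq_of_toDihedral_eq {y x : KleinGroup} (h : toDihedral y = toDihedral x) :
    QuotientGroup.mk' (normalClosure {φ bK ^ 2}) (φ y) =
      QuotientGroup.mk' (normalClosure {φ bK ^ 2}) (φ x) := by
  rw [QuotientGroup.mk'_apply, QuotientGroup.mk'_apply, QuotientGroup.eq, ← map_inv, ← map_mul]
  refine map_mem_normalClosure_sq ?_
  rw [← ker_toDihedral, MonoidHom.mem_ker, map_mul, map_inv, h, inv_mul_cancel]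

theorem exists_solution_of_toDihedral_eq {w : FreeGroup ℕ} {x : KleinGroup} (κ : ℕ → KleinGroup)
    (h : toDihedral (lift κ w) = toDihedral x) :
    ∃ k : ℕ → G ⧸ normalClosure {φ bK ^ 2},
      (∀ n, k n ∈ φ.range.map (QuotientGroup.mk' _)) ∧
        lift k w = QuotientGroup.mk' _ (φ x) := by
  refine ⟨fun n => QuotientGroup.mk' _ (φ (κ n)), fun n => ⟨φ (κ n), ⟨κ n, rfl⟩, rfl⟩, ?_⟩
  rw [← mk'_map_eq_of_toDihedral_eq h, MonoidHom.apply_freeGroupLift,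
    MonoidHom.apply_freeGroupLift]
  rfl

theorem exists_solution_of_toDihedral_eq_sr (hinj : Function.Injective φ)
    (hvc : VerballyClosed φ.range) {w : FreeGroup ℕ} {g : ℕ → G} {x : KleinGroup} {i : ZMod 0}
    (hx : toDihedral x = sr i) (hg : (lift g w)⁻¹ * φ x ∈ normalClosure {φ bK ^ 2}) :
    ∃ k : ℕ → G ⧸ normalClosure {φ bK ^ 2},
      (∀ n, k n ∈ φ.range.map (QuotientGroup.mk' _)) ∧
        lift k w = QuotientGroup.mk' _ (φ x) := by
  obtain ⟨ρ, g', hρ, hρg⟩ := exists_word_of_mem_normalClosure_pow 2 hg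
  obtain ⟨κ, hκ⟩ := hvc.exists_lift_eq_of_injective hinj (map Sum.inl w * map Sum.inr ρ) x
    ⟨Sum.elim g fun o => o.elim (φ bK) g', by
      rw [map_mul, FreeGroup.lift_map_apply, FreeGroup.lift_map_apply, Sum.elim_comp_inl,
        Sum.elim_comp_inr, hρg, mul_inv_cancel_left]⟩
  rw [map_mul, FreeGroup.lift_map_apply, FreeGroup.lift_map_apply] at hκ
  have hR : toDihedral (lift (κ ∘ Sum.inr) ρ) ∈ dihedralParity.ker :=
    normalClosure_le_normal (Set.singleton_subset_iff.mpr (by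
      rw [SetLike.mem_coe, MonoidHom.mem_ker, map_pow, dihedralParity_sq]))
      (toDihedral.map_mem_normalClosure (FreeGroup.lift_mem_normalClosure_pow hρ _))
  obtain ⟨k, hk⟩ := exists_r_conj_sr_mul_eq (inv_mem hR) i
  have hu : toDihedral (aK ^ (k.cast : ℤ)) = r k := by
    rw [map_zpow, toDihedral_aK, r_one_zpow, ZMod.intCast_cast, ZMod.cast_id', id]
  refine exists_solution_of_toDihedral_eq
    (fun n => aK ^ (k.cast : ℤ) * (κ ∘ Sum.inl) n * (aK ^ (k.cast : ℤ))⁻¹) ?_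
  rw [FreeGroup.lift_conj, eq_mul_inv_of_mul_eq hκ, map_mul, map_mul, map_mul, map_inv,
    map_inv, hu, hx, hk]

theorem toDihedral_eq_of_sq_conj_mul_eq {x y c ρ : KleinGroup} {m : ZMod 0}
    (hx : toDihedral x = r m) (hm : m ≠ 0) (hρ : ρ ∈ normalClosure {c ^ 2})
    (h : y ^ 2 * c * (y ^ 2)⁻¹ * c * ρ = x ^ 2 * bK * (x ^ 2)⁻¹ * bK) :
    toDihedral y = toDihedral x := by
  have hc : Odd (bExp c).toAdd := by
    obtain ⟨l, hl⟩ := bExp_of_mem_normalClosure_sq hρ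
    have h' := congrArg (fun y => (bExp y).toAdd) h
    simp only [map_mul, map_inv, map_pow, toAdd_mul, toAdd_inv, toAdd_pow, nsmul_eq_mul, hl,
      bExp_bK, toAdd_ofAdd] at h'
    exact Int.odd_of_mul_eq_one (b := 1 + l)
      (mul_left_cancel₀ two_ne_zero (by push_cast at h'; linear_combination h'))
  obtain ⟨j, hj⟩ := exists_toDihedral_eq_sr hc
  have hρ1 : toDihedral ρ = 1 := by
    rw [← MonoidHom.mem_ker, ker_toDihedral]
    exact normalClosure_sq_le_of_odd hc hρ
  have h' := congrArg toDihedral h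
  simp only [map_mul, map_inv, map_pow, hρ1, mul_one, hx, hj, toDihedral_bK] at h'
  rw [hx, eq_r_of_sq_mul_sr_mul_inv_mul_sr_eq hm (h'.trans (r_sq_mul_sr_mul_inv_mul_sr m 0))]

theorem exists_solution_of_toDihedral_eq_r (hinj : Function.Injective φ)
    (hvc : VerballyClosed φ.range) {w : FreeGroup ℕ} {g : ℕ → G} {x : KleinGroup} {m : ZMod 0}
    (hx : toDihedral x = r m) (hg : (lift g w)⁻¹ * φ x ∈ normalClosure {φ bK ^ 2}) :
    ∃ k : ℕ → G ⧸ normalClosure {φ bK ^ 2},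
      (∀ n, k n ∈ φ.range.map (QuotientGroup.mk' _)) ∧
        lift k w = QuotientGroup.mk' _ (φ x) := by
  rcases eq_or_ne m 0 with rfl | hm
  · refine exists_solution_of_toDihedral_eq (fun _ => 1) ?_
    rw [DFunLike.congr_fun (FreeGroup.ext_hom (lift fun _ => 1) 1 fun _ => rfl) w, hx, r_zero]
    rfl
  set V := lift g w
  set t := x ^ 2 * bK * (x ^ 2)⁻¹ * bK
  have hn : (V ^ 2 * φ bK * (V ^ 2)⁻¹ * φ bK)⁻¹ * φ t ∈ normalClosure {φ bK ^ 2} := by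
    have hV := QuotientGroup.eq.mpr hg
    rw [← QuotientGroup.eq]
    simp only [t, map_mul, map_inv, map_pow, QuotientGroup.mk_mul, QuotientGroup.mk_inv,
      QuotientGroup.mk_pow, hV]
  obtain ⟨ρ, g', hρ, hρg⟩ := exists_word_of_mem_normalClosure_pow 2 hn
  set w' : FreeGroup (ℕ ⊕ Option ℕ) := map Sum.inl w
  set z : FreeGroup (ℕ ⊕ Option ℕ) := of (Sum.inr none)
  obtain ⟨κ, hκ⟩ := hvc.exists_lift_eq_of_injective hinj
    (w' ^ 2 * z * (w' ^ 2)⁻¹ * z * map Sum.inr ρ) t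
    ⟨Sum.elim g fun o => o.elim (φ bK) g', by
      simp only [w', z, map_mul, map_inv, map_pow, FreeGroup.lift_map_apply, lift_apply_of,
        Sum.elim_comp_inl, Sum.elim_comp_inr, Sum.elim_inr, Option.elim_none, hρg]
      exact mul_inv_cancel_left _ _⟩
  simp only [w', z, map_mul, map_inv, map_pow, FreeGroup.lift_map_apply, lift_apply_of] at hκ
  exact exists_solution_of_toDihedral_eq (κ ∘ Sum.inl) (toDihedral_eq_of_sq_conj_mul_eq hx
    hm (FreeGroup.lift_mem_normalClosure_pow hρ (κ ∘ Sum.inr)) hκ)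

theorem verballyClosed_map_range (hinj : Function.Injective φ) (hvc : VerballyClosed φ.range) :
    VerballyClosed (φ.range.map (QuotientGroup.mk' (normalClosure {φ bK ^ 2}))) := by
  rintro w _ ⟨_, ⟨x, rfl⟩, rfl⟩ ⟨k, hk⟩
  choose g hg using fun n => QuotientGroup.mk'_surjective _ (k n)
  have hgx : (lift g w)⁻¹ * φ x ∈ normalClosure {φ bK ^ 2} := by
    rw [← QuotientGroup.eq, ← QuotientGroup.mk'_apply, MonoidHom.apply_freeGroupLift,
      show (QuotientGroup.mk' _ ∘ g) = k from funext hg, hk, QuotientGroup.mk'_apply]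
  rcases hx : toDihedral x with m | i
  · exact exists_solution_of_toDihedral_eq_r hinj hvc hx hgx
  · exact exists_solution_of_toDihedral_eq_sr hinj hvc hx hgx

end KleinGroup

/-- If the Klein bottle group `K` is verbally closed in `G`, then the image of `K`
in `G/⟨⟨b²⟩⟩` — which is isomorphic to the infinite dihedral group `K/⟨b²⟩` — is
verbally closed in `G/⟨⟨b²⟩⟩`. -/
theorem image_dihedral_verballyClosed {G : Type*} [Group G] (φ : KleinGroup →* G)
    (hinj : Function.Injective φ) (hvc : VerballyClosed φ.range) :
    Nonempty ((φ.range.map (QuotientGroup.mk' (Subgroup.normalClosure {φ bK ^ 2}))) ≃* Dinf) ∧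
      VerballyClosed (φ.range.map (QuotientGroup.mk' (Subgroup.normalClosure {φ bK ^ 2}))) :=
  ⟨KleinGroup.nonempty_map_range_mulEquiv hinj hvc, KleinGroup.verballyClosed_map_range hinj hvc⟩
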